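/- For a connected graph G, the polytope ∇_G is simplicial (every facet is a simplex) if and only if G has no even cycles. -/

import Mathlib

noncomputable def stdBasis {N : ℕ} (i : Fin N) : Fin N → ℝ := Pi.single i 1

def nabla {N : ℕ} (G : SimpleGraph (Fin N)) : Set (Fin N → ℝ) :=
  {x | ∃ i j, G.Adj i j ∧ x = stdBasis i - stdBasis j}

noncomputable def inn {N : ℕ} (x α : Fin N → ℝ) : ℝ := ∑ i, x i * α i

def IsFace {N : ℕ} (G : SimpleGraph (Fin N)) (F : Set (Fin N → ℝ)) : Prop :=
  ∃ α : Fin N → ℝ, (∀ x ∈ nabla G, -1 ≤ inn x α) ∧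
    F = {x | x ∈ nabla G ∧ inn x α = -1}

def IsFacet {N : ℕ} (G : SimpleGraph (Fin N)) (F : Set (Fin N → ℝ)) : Prop :=
  IsFace G F ∧ Module.finrank ℝ (vectorSpan ℝ F) = N - 2

def faceGraph {N : ℕ} (F : Set (Fin N → ℝ)) : SimpleGraph (Fin N) :=
  SimpleGraph.fromRel (fun i j => stdBasis i - stdBasis j ∈ F)

def MaxBipartiteSubgraph {N : ℕ} (G H : SimpleGraph (Fin N)) : Prop :=
  H ≤ G ∧ H.Colorable 2 ∧ ∀ H', H' ≤ G → H'.Colorable 2 → H ≤ H' → H' = H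

def inducedOn {N : ℕ} (G : SimpleGraph (Fin N)) (s : Set (Fin N)) : SimpleGraph (Fin N) where
  Adj i j := G.Adj i j ∧ i ∈ s ∧ j ∈ s
  symm := ⟨fun i j h => ⟨h.1.symm, h.2.2, h.2.1⟩⟩
  loopless := ⟨fun i h => G.irrefl h.1⟩



/-!
A facet of `∇_G` is cut out by a functional `α` with `α i - α j ≥ -1` on the edges of `G`; its
vertices `e_i - e_j` with `α j = α i + 1` are the oriented edges of a subgraph of `G` on which the
parity of `⌊α⌋` alternates, so this facet subgraph is bipartite. If `G` has no even cycle, the facet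
subgraph is therefore a forest, and the oriented edges of a forest are linearly independent: every
edge is a bridge, and the indicator of one side of it separates it from all other edges.

Conversely, an even cycle can be coloured alternately, and flipping colours outside the component of
the cycle extends this to a colouring whose bichromatic edges form a connected spanning subgraph.
The indicator of one colour class then defines a facet, whose vector span is the common kernel of
`∑ x_i` and `⟨x, α⟩` by connectivity, and the alternating signed sum of the oriented cycle edges is
an affine dependence among its vertices.
-/

namespace SimpleGraph

variable {V : Type*} {G H : SimpleGraph V}

def bichromatic (G : SimpleGraph V) (α : V → Bool) : SimpleGraph V where
  Adj a b := G.Adj a b ∧ α a ≠ α b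
  symm := ⟨fun _ _ h => ⟨h.1.symm, Ne.symm h.2⟩⟩
  loopless := ⟨fun _ h => h.2 rfl⟩

def Walk.IsAlternating {u w : V} (p : G.Walk u w) (α : V → Bool) : Prop :=
  ∀ r < p.length, α (p.getVert r) ≠ α (p.getVert (r + 1))

theorem isAcyclic_of_le_of_colorable_two (hle : H ≤ G) (hH : H.Colorable 2)
    (hG : ∀ (v : V) (c : G.Walk v v), c.IsCycle → ¬Even c.length) : H.IsAcyclic :=
  fun v c hc => hG v (c.mapLe hle) (hc.mapLe hle)
    (by rw [Walk.length_mapLe]; exact two_colorable_iff_forall_loop_even.mp hH v c)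

theorem colorable_two_of_abs_sub_eq_one (β : V → ℝ) (h : ∀ ⦃a b⦄, H.Adj a b → |β a - β b| = 1) :
    H.Colorable 2 := by
  refine (Coloring.mk (fun v => decide (Even ⌊β v⌋)) fun {a b} hab => ?_).colorable
  rcases abs_eq (zero_le_one' ℝ) |>.mp (h hab) with hβ | hβ
  · rw [show β a = β b + 1 by linarith, Int.floor_add_one]
    simp [← Int.not_even_iff_odd]
  · rw [show β a = β b - 1 by linarith, Int.floor_sub_one]
    simp [← Int.not_even_iff_odd]

theorem Walk.IsCycle.exists_isAlternating {v : V} {c : G.Walk v v} (hc : c.IsCycle)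
    (heven : Even c.length) : ∃ α : V → Bool, c.IsAlternating α := by
  classical
  let α x := decide (∃ r < c.length, Even r ∧ c.getVert r = x)
  have hα : ∀ r ≤ c.length, α (c.getVert r) = decide (Even r) := by
    intro r hr
    rcases hr.lt_or_eq with hr | rfl
    · refine decide_eq_decide.mpr ⟨fun ⟨r', hr', he, heq⟩ => ?_, fun he => ⟨r, hr, he, rfl⟩⟩
      rwa [hc.getVert_injOn' (by simp; omega) (by simp; omega) heq] at he
    · rw [show c.getVert c.length = c.getVert 0 by simp]
      simpa [α, heven] using ⟨0, by have := hc.three_le_length; omega, Even.zero, c.getVert_zero⟩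
  refine ⟨α, fun r hr => ?_⟩
  rw [hα r hr.le, hα (r + 1) hr]
  simp only [ne_eq, decide_eq_decide, Nat.even_add_one]
  tauto

theorem Reachable.apply_eq_of_forall_adj {X : Type*} {f : V → X}
    (hf : ∀ ⦃a b⦄, G.Adj a b → f a = f b) {u v : V} (h : G.Reachable u v) : f u = f v := by
  obtain ⟨p⟩ := h
  induction p with
  | nil => rfl
  | cons hadj _ ih => exact (hf hadj).trans ih

theorem Walk.IsAlternating.reachable_getVert {u w : V} {p : G.Walk u w} {α : V → Bool}
    (h : p.IsAlternating α) (r : ℕ) : (G.bichromatic α).Reachable u (p.getVert r) := by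
  induction r with
  | zero => simp
  | succ r ih =>
    by_cases hr : r < p.length
    · exact ih.trans (Adj.reachable ⟨p.adj_getVert_succ hr, h r hr⟩)
    · rwa [p.getVert_of_length_le (by omega : p.length ≤ r + 1),
        ← p.getVert_of_length_le (by omega : p.length ≤ r)]

theorem Connected.exists_isAlternating_bichromatic_connected [Finite V] (hG : G.Connected)
    {u w : V} (p : G.Walk u w) (h : ∃ α, p.IsAlternating α) :
    ∃ α, p.IsAlternating α ∧ (G.bichromatic α).Connected := by
  classical
  obtain ⟨α, halt, hmax⟩ :=
    Set.Finite.exists_maximalFor G.bichromatic {α | p.IsAlternating α} (Set.toFinite _) h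
  refine ⟨α, halt, (connected_iff_exists_forall_reachable _).mpr ⟨u, ?_⟩⟩
  by_contra! hK
  obtain ⟨x, hx⟩ := hK
  set K := {x | (G.bichromatic α).Reachable u x}
  -- flipping every colour outside the component `K` of `u` creates no new monochromatic edge
  let α' x := if x ∈ K then α x else !α x
  have hle : G.bichromatic α ≤ G.bichromatic α' := by
    rintro a b ⟨hab, hne⟩
    have hiff : a ∈ K ↔ b ∈ K := ⟨fun ha => ha.trans (Adj.reachable ⟨hab, hne⟩),
      fun hb => hb.trans (Adj.reachable ⟨hab.symm, hne.symm⟩)⟩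
    refine ⟨hab, ?_⟩
    by_cases ha : a ∈ K <;> simp_all [α']
  obtain ⟨d, -, hd, hd'⟩ := (hG.preconnected u x).some.exists_boundary_dart K Reachable.rfl hx
  have hdα : α d.fst = α d.snd := by
    by_contra hne
    exact hd' (hd.trans (Adj.reachable ⟨d.adj, hne⟩))
  have halt' : p.IsAlternating α' := fun r hr => by
    simpa [α', K, halt.reachable_getVert] using halt r hr
  exact (hmax halt' hle ⟨d.adj, by simp [α', hd, hd', hdα]⟩).2 hdα

end SimpleGraph

open SimpleGraph

section
variable {N : ℕ}

def innₗ (α : Fin N → ℝ) : (Fin N → ℝ) →ₗ[ℝ] ℝ := (dotProductBilin ℝ ℝ).flip α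

theorem innₗ_apply (α x : Fin N → ℝ) : innₗ α x = inn x α := rfl

theorem innₗ_stdBasis (α : Fin N → ℝ) (i : Fin N) : innₗ α (stdBasis i) = α i := by
  simp [innₗ_apply, inn, stdBasis, Pi.single_apply]

theorem inn_stdBasis_sub (α : Fin N → ℝ) (i j : Fin N) :
    inn (stdBasis i - stdBasis j) α = α i - α j := by
  rw [← innₗ_apply, map_sub, innₗ_stdBasis, innₗ_stdBasis]

theorem sym2_eq_of_smul_stdBasis_sub_eq {a b c d : Fin N} {σ τ : ℝ} (hab : a ≠ b) (hσ : σ ≠ 0)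
    (h : σ • (stdBasis a - stdBasis b) = τ • (stdBasis c - stdBasis d)) : s(a, b) = s(c, d) := by
  have ha := congrFun h a
  have hb := congrFun h b
  simp only [Pi.smul_apply, Pi.sub_apply, stdBasis, Pi.single_apply, smul_eq_mul] at ha hb
  rw [Sym2.eq_iff]
  split_ifs at ha hb <;> simp_all

def faceOf (G : SimpleGraph (Fin N)) (α : Fin N → ℝ) : Set (Fin N → ℝ) :=
  {x | x ∈ nabla G ∧ inn x α = -1}

theorem adj_of_stdBasis_sub_mem_faceOf {G : SimpleGraph (Fin N)} {α : Fin N → ℝ} {a b : Fin N}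
    (hab : a ≠ b) (h : stdBasis a - stdBasis b ∈ faceOf G α) : G.Adj a b ∧ α a - α b = -1 := by
  obtain ⟨⟨i, j, hij, hx⟩, hα⟩ := h
  rw [← one_smul ℝ (stdBasis a - stdBasis b), ← one_smul ℝ (stdBasis i - stdBasis j)] at hx
  refine ⟨?_, by rwa [inn_stdBasis_sub] at hα⟩
  rw [← mem_edgeSet, sym2_eq_of_smul_stdBasis_sub_eq hab one_ne_zero hx]
  exact hij

theorem faceGraph_faceOf_adj {G : SimpleGraph (Fin N)} {α : Fin N → ℝ} {a b : Fin N}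
    (h : (faceGraph (faceOf G α)).Adj a b) : G.Adj a b ∧ |α a - α b| = 1 := by
  obtain ⟨hab, hx | hx⟩ := h
  · obtain ⟨hG, hα⟩ := adj_of_stdBasis_sub_mem_faceOf hab hx
    exact ⟨hG, by rw [hα, abs_neg, abs_one]⟩
  · obtain ⟨hG, hα⟩ := adj_of_stdBasis_sub_mem_faceOf hab.symm hx
    exact ⟨hG.symm, by rw [abs_sub_comm, hα, abs_neg, abs_one]⟩

theorem linearIndependent_of_isAcyclic_faceGraph {F : Set (Fin N → ℝ)}
    (hF : ∀ x ∈ F, ∃ i j, i ≠ j ∧ x = stdBasis i - stdBasis j) (hneg : ∀ x ∈ F, -x ∉ F)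
    (hacyc : (faceGraph F).IsAcyclic) : LinearIndependent ℝ (fun x : F => (x : Fin N → ℝ)) := by
  classical
  have key : ∀ x₀ : F, ∃ φ : Module.Dual ℝ (Fin N → ℝ),
      φ x₀ = 1 ∧ ∀ x : F, x ≠ x₀ → φ x = 0 := by
    rintro ⟨x₀, hx₀⟩
    obtain ⟨a, b, hab, rfl⟩ := hF x₀ hx₀
    set H := (faceGraph F).deleteEdges {s(a, b)}
    have hbridge : ¬H.Reachable a b :=
      isBridge_iff.mp (isAcyclic_iff_forall_adj_isBridge.mp hacyc ⟨hab, Or.inl hx₀⟩)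
    refine ⟨innₗ ({u | H.Reachable a u}.indicator 1), ?_, ?_⟩
    · simp [innₗ_apply, inn_stdBasis_sub, hbridge]
    · rintro ⟨x, hx⟩ hne
      obtain ⟨c, d, hcd, rfl⟩ := hF x hx
      have hH : H.Adj c d := by
        refine deleteEdges_adj.mpr ⟨⟨hcd, Or.inl hx⟩, ?_⟩
        rw [Set.mem_singleton_iff, Sym2.eq_iff]
        rintro (⟨rfl, rfl⟩ | ⟨rfl, rfl⟩)
        · exact hne rfl
        · exact hneg _ hx₀ (by rwa [neg_sub])
      have hcd' : H.Reachable a c ↔ H.Reachable a d :=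
        ⟨fun h => h.trans hH.reachable, fun h => h.trans hH.symm.reachable⟩
      simp [innₗ_apply, inn_stdBasis_sub, Set.indicator, hcd']
  choose φ hφ₁ hφ₀ using key
  exact .of_pairwise_dual_eq_zero_one _ φ (fun x y hxy => hφ₀ x y hxy.symm) hφ₁

theorem affineIndependent_faceOf {G : SimpleGraph (Fin N)}
    (hG : ∀ (v : Fin N) (c : G.Walk v v), c.IsCycle → ¬Even c.length) (α : Fin N → ℝ) :
    AffineIndependent ℝ (fun x : faceOf G α => (x : Fin N → ℝ)) := by
  refine (linearIndependent_of_isAcyclic_faceGraph ?_ ?_ ?_).affineIndependent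
  · rintro x ⟨⟨i, j, hij, rfl⟩, -⟩
    exact ⟨i, j, hij.ne, rfl⟩
  · rintro x ⟨-, hx⟩ ⟨-, hnx⟩
    rw [← innₗ_apply, map_neg, innₗ_apply, hx] at hnx
    norm_num at hnx
  · exact isAcyclic_of_le_of_colorable_two (fun _ _ h => (faceGraph_faceOf_adj h).1)
      (colorable_two_of_abs_sub_eq_one α fun _ _ h => (faceGraph_faceOf_adj h).2) hG

def trueIndicator (α : Fin N → Bool) : Fin N → ℝ := fun i => (α i).toNat

variable {G : SimpleGraph (Fin N)} {α : Fin N → Bool}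

theorem trueIndicator_sub_mul_self {a b : Fin N} (h : α a ≠ α b) :
    (trueIndicator α b - trueIndicator α a) * (trueIndicator α b - trueIndicator α a) = 1 := by
  cases ha : α a <;> cases hb : α b <;> simp_all [trueIndicator]

theorem smul_stdBasis_sub_mem_faceOf {a b : Fin N} (hab : (G.bichromatic α).Adj a b) :
    (trueIndicator α b - trueIndicator α a) • (stdBasis a - stdBasis b)
      ∈ faceOf G (trueIndicator α) := by
  obtain ⟨hG, hne⟩ := hab
  cases ha : α a <;> cases hb : α b <;> simp only [ha, hb, ne_eq, not_true_eq_false] at hne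
  · simp only [trueIndicator, ha, hb, Bool.toNat_true, Bool.toNat_false]
    exact ⟨⟨a, b, hG, by simp⟩, by simp [inn_stdBasis_sub, trueIndicator, ha, hb]⟩
  · simp only [trueIndicator, ha, hb, Bool.toNat_true, Bool.toNat_false]
    exact ⟨⟨b, a, hG.symm, by simp⟩, by simp [inn_stdBasis_sub, trueIndicator, ha, hb]⟩

theorem isFace_faceOf_trueIndicator (G : SimpleGraph (Fin N)) (α : Fin N → Bool) :
    IsFace G (faceOf G (trueIndicator α)) := by
  refine ⟨trueIndicator α, ?_, rfl⟩
  rintro _ ⟨i, j, -, rfl⟩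
  simp only [inn_stdBasis_sub, trueIndicator]
  cases α i <;> cases α j <;> norm_num

theorem vectorSpan_faceOf_le_ker (G : SimpleGraph (Fin N)) (β : Fin N → ℝ) :
    vectorSpan ℝ (faceOf G β) ≤ LinearMap.ker ((innₗ 1).prod (innₗ β)) := by
  have hΦ : ∀ x ∈ faceOf G β, (innₗ 1).prod (innₗ β) x = (0, -1) := by
    rintro x ⟨⟨i, j, -, rfl⟩, hx⟩
    simp [innₗ_apply, inn_stdBasis_sub, hx]
  rw [vectorSpan_def, Submodule.span_le]
  rintro _ ⟨x, hx, y, hy, rfl⟩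
  simp only [SetLike.mem_coe, LinearMap.mem_ker, vsub_eq_sub, map_sub, hΦ x hx, hΦ y hy, sub_self]

theorem ker_le_vectorSpan_faceOf (hconn : (G.bichromatic α).Connected) {x₀ : Fin N → ℝ}
    (hx₀ : x₀ ∈ faceOf G (trueIndicator α)) :
    LinearMap.ker ((innₗ 1).prod (innₗ (trueIndicator α)))
      ≤ vectorSpan ℝ (faceOf G (trueIndicator α)) := by
  set β := trueIndicator α
  set W := vectorSpan ℝ (faceOf G β)
  let ψ u := stdBasis u + β u • x₀
  have hψ : ∀ u v, ψ u - ψ v ∈ W := by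
    have hadj : ∀ ⦃a b⦄, (G.bichromatic α).Adj a b → W.mkQ (ψ a) = W.mkQ (ψ b) := by
      intro a b hab
      rw [← sub_eq_zero, ← map_sub, Submodule.mkQ_apply, Submodule.Quotient.mk_eq_zero]
      have hp := vsub_mem_vectorSpan ℝ (smul_stdBasis_sub_mem_faceOf hab) hx₀
      have : ψ a - ψ b = (β b - β a) • ((β b - β a) • (stdBasis a - stdBasis b) -ᵥ x₀) := by
        rw [vsub_eq_sub, smul_sub, smul_smul, trueIndicator_sub_mul_self hab.2, one_smul]
        simp only [ψ]
        module
      rw [this]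
      exact W.smul_mem _ hp
    intro u v
    rw [← Submodule.Quotient.eq]
    exact (hconn.preconnected u v).apply_eq_of_forall_adj hadj
  intro z hz
  have hsum : ∑ i, z i = 0 := by simpa [innₗ_apply, inn] using congrArg Prod.fst hz
  have hβ : ∑ i, z i * β i = 0 := congrArg Prod.snd hz
  obtain ⟨u⟩ := hconn.nonempty
  have hz : z = ∑ i, z i • (ψ i - ψ u) := by
    simp only [smul_sub, Finset.sum_sub_distrib, ← Finset.sum_smul, hsum, zero_smul, sub_zero]
    simp only [ψ, smul_add, Finset.sum_add_distrib, smul_smul, ← Finset.sum_smul, hβ, zero_smul,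
      add_zero]
    exact pi_eq_sum_univ' z
  rw [hz]
  exact W.sum_mem fun i _ => W.smul_mem _ (hψ i u)

theorem finrank_ker_innₗ_prod {β : Fin N → ℝ} {a b : Fin N} (hab : β a ≠ β b) :
    Module.finrank ℝ (LinearMap.ker ((innₗ 1).prod (innₗ β))) = N - 2 := by
  have hsurj : Function.Surjective ((innₗ 1).prod (innₗ β)) := by
    rintro ⟨s, t⟩
    refine ⟨((t - s * β b) / (β a - β b)) • stdBasis a
      + ((s * β a - t) / (β a - β b)) • stdBasis b, ?_⟩
    have := sub_ne_zero.mpr hab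
    refine Prod.ext ?_ ?_ <;>
      simp [innₗ_stdBasis] <;> field_simp <;> ring
  have := LinearMap.finrank_range_add_finrank_ker ((innₗ 1).prod (innₗ β))
  rw [LinearMap.range_eq_top.mpr hsurj, finrank_top, Module.finrank_prod, Module.finrank_self,
    Module.finrank_fin_fun] at this
  omega

theorem isFacet_faceOf_trueIndicator (hconn : (G.bichromatic α).Connected) {a b : Fin N}
    (hab : (G.bichromatic α).Adj a b) : IsFacet G (faceOf G (trueIndicator α)) := by
  refine ⟨isFace_faceOf_trueIndicator G α, ?_⟩
  rw [le_antisymm (vectorSpan_faceOf_le_ker G _)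
    (ker_le_vectorSpan_faceOf hconn (smul_stdBasis_sub_mem_faceOf hab))]
  refine finrank_ker_innₗ_prod (a := a) (b := b) fun h => ?_
  simpa [h] using trueIndicator_sub_mul_self hab.2

theorem not_affineIndependent_faceOf_of_isAlternating {v : Fin N} {c : G.Walk v v}
    (hc : c.IsCycle) (halt : c.IsAlternating α) :
    ¬AffineIndependent ℝ (fun x : faceOf G (trueIndicator α) => (x : Fin N → ℝ)) := by
  intro haff
  set β := trueIndicator α
  let σ : ℕ → ℝ := fun r => β (c.getVert (r + 1)) - β (c.getVert r)
  let p : Fin c.length → Fin N → ℝ :=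
    fun r => σ r • (stdBasis (c.getVert r) - stdBasis (c.getVert (r + 1)))
  have hadj : ∀ r : Fin c.length, (G.bichromatic α).Adj (c.getVert r) (c.getVert (r + 1)) :=
    fun r => ⟨c.adj_getVert_succ r.2, halt r r.2⟩
  have hσ : ∀ r : Fin c.length, σ r * σ r = 1 := fun r => trueIndicator_sub_mul_self (hadj r).2
  have hinj : Function.Injective p := by
    intro r r' h
    have he := sym2_eq_of_smul_stdBasis_sub_eq (hadj r).1.ne (left_ne_zero_of_mul_eq_one (hσ r)) h
    rw [← c.getElem_edges (by simp), ← c.getElem_edges (by simp)] at he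
    exact Fin.ext (hc.edges_nodup.getElem_inj_iff.mp he)
  have hrange : Set.range p ⊆ faceOf G β := by
    rintro _ ⟨r, rfl⟩
    exact smul_stdBasis_sub_mem_faceOf (hadj r)
  have hp : AffineIndependent ℝ p := (haff.mono hrange).of_set_of_injective hinj
  -- both the weights `σ` and the combination `∑ σ r • p r` telescope around the closed walk
  have hσsum : ∑ r : Fin c.length, σ r = 0 := by
    rw [Fin.sum_univ_eq_sum_range σ, Finset.sum_range_sub (fun r => β (c.getVert r)),
      c.getVert_length, c.getVert_zero, sub_self]
  have hpsum : ∑ r : Fin c.length, σ r • p r = 0 := by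
    simp only [p, smul_smul, hσ, one_smul]
    rw [Fin.sum_univ_eq_sum_range (fun r => stdBasis (c.getVert r) - stdBasis (c.getVert (r + 1))),
      Finset.sum_range_sub', c.getVert_length, c.getVert_zero, sub_self]
  have h0 : 0 < c.length := hc.three_le_length.trans_lt' (by norm_num)
  have := affineIndependent_iff.mp hp Finset.univ (fun r => σ r) hσsum hpsum ⟨0, h0⟩ (by simp)
  simpa [this] using hσ ⟨0, h0⟩

theorem exists_isFacet_not_affineIndependent (hG : G.Connected) {v : Fin N} (c : G.Walk v v)
    (hc : c.IsCycle) (heven : Even c.length) :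
    ∃ F, IsFacet G F ∧ ¬AffineIndependent ℝ (fun x : F => (x : Fin N → ℝ)) := by
  obtain ⟨α, halt, hconn⟩ :=
    hG.exists_isAlternating_bichromatic_connected c (hc.exists_isAlternating heven)
  have h0 : 0 < c.length := hc.three_le_length.trans_lt' (by norm_num)
  exact ⟨_, isFacet_faceOf_trueIndicator hconn ⟨c.adj_getVert_succ h0, halt 0 h0⟩,
    not_affineIndependent_faceOf_of_isAlternating hc halt⟩

end

theorem stmt19 {N : ℕ} (G : SimpleGraph (Fin N)) (hG : G.Connected) :
    (∀ F : Set (Fin N → ℝ), IsFacet G F →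
        AffineIndependent ℝ (fun x : F => (x : Fin N → ℝ))) ↔
    (∀ (v : Fin N) (c : G.Walk v v), c.IsCycle → ¬ Even c.length) := by
  constructor
  · intro hsimplicial v c hc heven
    obtain ⟨F, hF, hdep⟩ := exists_isFacet_not_affineIndependent hG c hc heven
    exact hdep (hsimplicial F hF)
  · rintro hno F ⟨⟨α, -, rfl⟩, -⟩
    exact affineIndependent_faceOf hno α
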